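/- arXiv:2212.04166 — 2 statements merged into one kernel-verified Lean document; each statement's English description precedes it below -/
import Mathlib

section
/- With the gluing construction J, let u'_j ∈ V(G_j) \ {u_j}. Then the set of vertices maximally distant from u'_j in J equals (MD_{G_j}(u'_j) \ {u_j}) ∪ (MD_H(v_j) \ {v_1,...,v_k}) ∪ ⋃_{i≠j} MD_{G_i}(u_i). -/
open SimpleGraph

/-- `y` is maximally distant from `x` in `G`: no neighbor of `y` is farther from `x` than `y`. -/
def MaxDistantFrom {V : Type*} (G : SimpleGraph V) (y x : V) : Prop :=
  ∀ z, G.Adj y z → G.dist z x ≤ G.dist y x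

/-- `u` and `v` are mutually maximally distant in `G`. -/
def MutuallyMaxDistant {V : Type*} (G : SimpleGraph V) (u v : V) : Prop :=
  MaxDistantFrom G u v ∧ MaxDistantFrom G v u

/-- The strong resolving graph of `G`: edges are the mutually maximally distant pairs. -/
def srGraph {V : Type*} (G : SimpleGraph V) : SimpleGraph V where
  Adj u v := u ≠ v ∧ MutuallyMaxDistant G u v
  symm := ⟨fun u v h => ⟨h.1.symm, h.2.2, h.2.1⟩⟩
  loopless := ⟨fun u h => h.1 rfl⟩

/-- `w` strongly resolves `u` and `v`: `v` lies on a shortest `w`–`u` path, or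
`u` lies on a shortest `w`–`v` path. -/
def StronglyResolves {V : Type*} (G : SimpleGraph V) (w u v : V) : Prop :=
  G.dist w v + G.dist v u = G.dist w u ∨ G.dist w u + G.dist u v = G.dist w v

/-- `R` is a strong resolving set for `G`. -/
def StrongResolvingSet {V : Type*} (G : SimpleGraph V) (R : Set V) : Prop :=
  ∀ u v : V, u ≠ v → ∃ w ∈ R, StronglyResolves G w u v
/-- The graph obtained from the disjoint union of the graphs `G i` and `H` by identifying,
for each `i`, the vertex `u i` of `G i` with the vertex `v i` of `H`.  The vertices of
`G i` other than `u i` keep their identity (as `Sum.inl ⟨i, x⟩`), the vertices of `H`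
keep their identity (as `Sum.inr w`), and `u i` is identified with `v i`. -/
def glue {k : ℕ} {α : Fin k → Type*} {β : Type*}
    (G : ∀ i, SimpleGraph (α i)) (H : SimpleGraph β) (u : ∀ i, α i) (v : Fin k → β) :
    SimpleGraph ((Σ i, {x : α i // x ≠ u i}) ⊕ β) where
  Adj a b :=
    (∃ (i : Fin k) (x y : {z : α i // z ≠ u i}), (G i).Adj x.1 y.1 ∧
        a = Sum.inl ⟨i, x⟩ ∧ b = Sum.inl ⟨i, y⟩) ∨
    (∃ (i : Fin k) (x : {z : α i // z ≠ u i}), (G i).Adj x.1 (u i) ∧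
        ((a = Sum.inl ⟨i, x⟩ ∧ b = Sum.inr (v i)) ∨
         (b = Sum.inl ⟨i, x⟩ ∧ a = Sum.inr (v i)))) ∨
    (∃ w w' : β, H.Adj w w' ∧ a = Sum.inr w ∧ b = Sum.inr w')
  symm := by
    constructor
    rintro a b (⟨i, x, y, hxy, ha, hb⟩ | ⟨i, x, hx, h | h⟩ | ⟨w, w', hww, ha, hb⟩)
    · exact Or.inl ⟨i, y, x, hxy.symm, hb, ha⟩
    · exact Or.inr (Or.inl ⟨i, x, hx, Or.inr h⟩)
    · exact Or.inr (Or.inl ⟨i, x, hx, Or.inl h⟩)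
    · exact Or.inr (Or.inr ⟨w', w, hww.symm, hb, ha⟩)
  loopless := by
    constructor
    rintro a (⟨i, x, y, hxy, ha, hb⟩ | ⟨i, x, _, ⟨ha, hb⟩ | ⟨ha, hb⟩⟩ | ⟨w, w', hww, ha, hb⟩)
    · subst ha
      injection hb with h
      injection h with h1 h2
      subst h2
      exact (G i).loopless.irrefl _ hxy
    · subst ha; simp at hb
    · subst ha; simp at hb
    · subst ha
      injection hb with h
      subst h
      exact H.loopless.irrefl _ hww

/-! The gluing vertices are cut vertices, so the distance from `u'` in the glued graph `J` has an
explicit form `glue.distTo`: it is bounded above by mapping shortest paths of `G i` and `H`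
into `J`, and below because it changes by at most one along each edge of `J`. On each copy of
`G i` or of `H` it is the distance to a fixed vertex plus a constant, and a vertex of `J` other
than a gluing vertex has all its neighbours in its own copy, so maximal distance transfers
between `J` and the pieces. A gluing vertex `v i` is never maximally distant from `u'`: its
neighbours in `G i` (if `i ≠ j`) or in `H` (if `i = j`) are farther away. -/

namespace SimpleGraph

variable {V W : Type*} {G : SimpleGraph V}

theorem Reachable.dist_map_le {G' : SimpleGraph W} (f : G →g G') {x y : V}
    (h : G.Reachable x y) : G'.dist (f x) (f y) ≤ G.dist x y := by
  obtain ⟨p, hp⟩ := h.exists_walk_length_eq_dist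
  calc G'.dist (f x) (f y) ≤ (p.map f).length := dist_le _
    _ = G.dist x y := by rw [Walk.length_map, hp]

theorem Adj.dist_le_dist_add_one {x y : V} (h : G.Adj x y) (z : V) :
    G.dist x z ≤ G.dist y z + 1 := by
  have := h.reachable.dist_triangle_left z
  rwa [dist_eq_one_iff_adj.mpr h, add_comm] at this

theorem Walk.apply_le_length_add {f : V → ℕ} (hf : ∀ ⦃a b⦄, G.Adj a b → f a ≤ f b + 1)
    {x y : V} (p : G.Walk x y) : f x ≤ p.length + f y := by
  induction p with
  | nil => simp
  | cons h p ih =>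
    have := hf h
    rw [Walk.length_cons]
    omega

theorem Reachable.apply_le_dist_add {f : V → ℕ} (hf : ∀ ⦃a b⦄, G.Adj a b → f a ≤ f b + 1)
    {x y : V} (h : G.Reachable x y) : f x ≤ G.dist x y + f y := by
  obtain ⟨p, hp⟩ := h.exists_walk_length_eq_dist
  exact hp ▸ p.apply_le_length_add hf

end SimpleGraph

section MaxDistantFrom

variable {V W : Type*} {G : SimpleGraph V} {G' : SimpleGraph W} (φ : G →g G')
  {x x₀ : V} {y₀ : W} {c : ℕ}

theorem MaxDistantFrom.of_map (hd : ∀ y, G'.dist (φ y) y₀ = G.dist y x₀ + c)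
    (h : MaxDistantFrom G' (φ x) y₀) : MaxDistantFrom G x x₀ := by
  intro y hy
  have := h (φ y) (φ.map_adj hy)
  rw [hd, hd] at this
  omega

theorem MaxDistantFrom.map (hd : ∀ y, G'.dist (φ y) y₀ = G.dist y x₀ + c)
    (hnbr : ∀ b, G'.Adj (φ x) b → ∃ y, G.Adj x y ∧ φ y = b)
    (h : MaxDistantFrom G x x₀) : MaxDistantFrom G' (φ x) y₀ := by
  intro b hb
  obtain ⟨y, hy, rfl⟩ := hnbr b hb
  rw [hd, hd]
  exact Nat.add_le_add_right (h y hy) c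

theorem maxDistantFrom_map_iff (hd : ∀ y, G'.dist (φ y) y₀ = G.dist y x₀ + c)
    (hnbr : ∀ b, G'.Adj (φ x) b → ∃ y, G.Adj x y ∧ φ y = b) :
    MaxDistantFrom G' (φ x) y₀ ↔ MaxDistantFrom G x x₀ :=
  ⟨.of_map φ hd, .map φ hd hnbr⟩

end MaxDistantFrom

namespace glue

variable {k : ℕ} {α : Fin k → Type*} {β : Type*}
  (G : ∀ i, SimpleGraph (α i)) (H : SimpleGraph β) (u : ∀ i, α i) (v : Fin k → β)

def inclH : H →g glue G H u v where
  toFun := Sum.inr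
  map_rel' h := Or.inr (Or.inr ⟨_, _, h, rfl, rfl⟩)

open Classical in
noncomputable def inclG (i : Fin k) : G i →g glue G H u v where
  toFun x := if h : x = u i then Sum.inr (v i) else Sum.inl ⟨i, ⟨x, h⟩⟩
  map_rel' {x y} hxy := by
    by_cases hx : x = u i <;> by_cases hy : y = u i
    · exact absurd (hx ▸ hy ▸ hxy) (G i).irrefl
    · simp only [dif_pos hx, dif_neg hy]
      exact Or.inr (Or.inl ⟨i, ⟨y, hy⟩, hx ▸ hxy.symm, Or.inr ⟨rfl, rfl⟩⟩)
    · simp only [dif_neg hx, dif_pos hy]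
      exact Or.inr (Or.inl ⟨i, ⟨x, hx⟩, hy ▸ hxy, Or.inl ⟨rfl, rfl⟩⟩)
    · simp only [dif_neg hx, dif_neg hy]
      exact Or.inl ⟨i, ⟨x, hx⟩, ⟨y, hy⟩, hxy, rfl, rfl⟩

/-- A path from `G i` (`i ≠ j`) or from `H` to `u'` passes through the cut vertices `v i` and
`v j`, so this is the distance to `u'` in the glued graph (`dist_eq_distTo`). -/
noncomputable def distTo (j : Fin k) (u' : α j) : (Σ i, {x : α i // x ≠ u i}) ⊕ β → ℕ
  | .inl ⟨i, x⟩ =>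
    if h : i = j then (G j).dist (h ▸ x.1) u'
    else (G i).dist x.1 (u i) + H.dist (v i) (v j) + (G j).dist (u j) u'
  | .inr z => H.dist z (v j) + (G j).dist (u j) u'

variable {G H u v}

@[simp]
theorem inclH_apply (z : β) : inclH G H u v z = .inr z := rfl

theorem inclG_apply_coe {i : Fin k} (x : {z : α i // z ≠ u i}) :
    inclG G H u v i x = .inl ⟨i, x⟩ :=
  dif_neg x.2

@[simp]
theorem inclG_apply_self (i : Fin k) : inclG G H u v i (u i) = .inr (v i) :=
  dif_pos rfl

theorem adj_cases {a b : (Σ i, {x : α i // x ≠ u i}) ⊕ β} (h : (glue G H u v).Adj a b) :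
    (∃ i x y, (G i).Adj x y ∧ inclG G H u v i x = a ∧ inclG G H u v i y = b) ∨
      ∃ w w', H.Adj w w' ∧ inclH G H u v w = a ∧ inclH G H u v w' = b := by
  rcases h with ⟨i, x, y, hxy, rfl, rfl⟩ | ⟨i, x, hx, ⟨rfl, rfl⟩ | ⟨rfl, rfl⟩⟩ |
    ⟨w, w', hww, rfl, rfl⟩
  · exact .inl ⟨i, x, y, hxy, inclG_apply_coe x, inclG_apply_coe y⟩
  · exact .inl ⟨i, x, u i, hx, inclG_apply_coe x, inclG_apply_self i⟩
  · exact .inl ⟨i, u i, x, hx.symm, inclG_apply_self i, inclG_apply_coe x⟩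
  · exact .inr ⟨w, w', hww, rfl, rfl⟩

theorem exists_adj_of_adj_inclG {i : Fin k} {x : {z : α i // z ≠ u i}}
    {b : (Σ i, {x : α i // x ≠ u i}) ⊕ β} (h : (glue G H u v).Adj (inclG G H u v i x) b) :
    ∃ y, (G i).Adj x.1 y ∧ inclG G H u v i y = b := by
  rw [inclG_apply_coe] at h
  rcases h with ⟨i', x', y, hxy, ha, rfl⟩ | ⟨i', x', hx, ⟨ha, rfl⟩ | ⟨hb, ha⟩⟩ |
    ⟨w, w', hww, ha, rfl⟩
  · obtain ⟨rfl, rfl⟩ := Sigma.ext_iff.mp (Sum.inl.inj ha)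
    exact ⟨y, hxy, inclG_apply_coe y⟩
  · obtain ⟨rfl, rfl⟩ := Sigma.ext_iff.mp (Sum.inl.inj ha)
    exact ⟨u i, hx, inclG_apply_self i⟩
  · cases ha
  · cases ha

theorem exists_adj_of_adj_inr {z : β} (hz : ∀ i, z ≠ v i)
    {b : (Σ i, {x : α i // x ≠ u i}) ⊕ β} (h : (glue G H u v).Adj (.inr z) b) :
    ∃ w, H.Adj z w ∧ inclH G H u v w = b := by
  rcases h with ⟨i, x, y, hxy, ha, rfl⟩ | ⟨i, x, hx, ⟨ha, rfl⟩ | ⟨rfl, ha⟩⟩ |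
    ⟨w, w', hww, ha, rfl⟩
  · cases ha
  · cases ha
  · exact absurd (Sum.inr.inj ha) (hz i)
  · obtain rfl := Sum.inr.inj ha
    exact ⟨w', hww, rfl⟩

theorem connected (hGc : ∀ i, (G i).Connected) (hHc : H.Connected) :
    (glue G H u v).Connected := by
  have : Nonempty β := hHc.nonempty
  have reach_inr : ∀ a, ∃ z, (glue G H u v).Reachable a (.inr z) := by
    rintro (⟨i, x⟩ | z)
    · refine ⟨v i, ?_⟩
      simpa [inclG_apply_coe x] using
        ((hGc i).preconnected x.1 (u i)).map (inclG G H u v i)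
    · exact ⟨z, .rfl⟩
  refine (connected_iff _).mpr ⟨fun a b => ?_, ⟨.inr (Classical.arbitrary β)⟩⟩
  obtain ⟨z, hz⟩ := reach_inr a
  obtain ⟨w, hw⟩ := reach_inr b
  exact hz.trans (((hHc.preconnected z w).map (inclH G H u v)).trans hw.symm)

section distTo

variable (j : Fin k) (u' : α j)

@[simp]
theorem distTo_inr (z : β) :
    distTo G H u v j u' (.inr z) = H.dist z (v j) + (G j).dist (u j) u' := rfl

@[simp]
theorem distTo_inclG_self (y : α j) :
    distTo G H u v j u' (inclG G H u v j y) = (G j).dist y u' := by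
  by_cases hy : y = u j
  · simp [hy]
  · rw [inclG_apply_coe ⟨y, hy⟩]
    exact dif_pos rfl

theorem distTo_inclG_of_ne {i : Fin k} (hij : i ≠ j) (y : α i) :
    distTo G H u v j u' (inclG G H u v i y) =
      (G i).dist y (u i) + distTo G H u v j u' (.inr (v i)) := by
  by_cases hy : y = u i
  · simp [hy]
  · rw [inclG_apply_coe ⟨y, hy⟩, distTo_inr, ← add_assoc]
    exact dif_neg hij

theorem distTo_le_of_adj {a b : (Σ i, {x : α i // x ≠ u i}) ⊕ β} (h : (glue G H u v).Adj a b) :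
    distTo G H u v j u' a ≤ distTo G H u v j u' b + 1 := by
  rcases adj_cases h with ⟨i, x, y, hxy, rfl, rfl⟩ | ⟨w, w', hww, rfl, rfl⟩
  · by_cases hij : i = j
    · subst hij
      simpa using hxy.dist_le_dist_add_one u'
    · simp only [distTo_inclG_of_ne j u' hij]
      have := hxy.dist_le_dist_add_one (u i)
      omega
  · have := hww.dist_le_dist_add_one (v j)
    simp only [inclH_apply, distTo_inr]
    omega

end distTo

section dist

variable (j : Fin k) (hGc : ∀ i, (G i).Connected) (hHc : H.Connected)
  (u' : {z : α j // z ≠ u j})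
include hGc hHc

theorem dist_le_distTo (a : (Σ i, {x : α i // x ≠ u i}) ⊕ β) :
    (glue G H u v).dist a (.inl ⟨j, u'⟩) ≤ distTo G H u v j u' a := by
  have hJ := connected (u := u) (v := v) hGc hHc
  have hbase : inclG G H u v j u' = .inl ⟨j, u'⟩ := inclG_apply_coe u'
  have hG (i : Fin k) (x y : α i) :
      (glue G H u v).dist (inclG G H u v i x) (inclG G H u v i y) ≤ (G i).dist x y :=
    Reachable.dist_map_le _ ((hGc i).preconnected x y)
  have hinr (z : β) :
      (glue G H u v).dist (.inr z) (.inl ⟨j, u'⟩) ≤ distTo G H u v j u' (.inr z) := calc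
    _ ≤ (glue G H u v).dist (inclH G H u v z) (inclH G H u v (v j)) +
          (glue G H u v).dist (inclG G H u v j (u j)) (inclG G H u v j u') := by
      rw [inclH_apply, inclH_apply, inclG_apply_self, hbase]
      exact hJ.dist_triangle
    _ ≤ _ := Nat.add_le_add (Reachable.dist_map_le _ (hHc.preconnected _ _)) (hG j _ _)
  rcases a with ⟨i, x⟩ | z
  · rw [show Sum.inl ⟨i, x⟩ = inclG G H u v i x from (inclG_apply_coe x).symm]
    by_cases hij : i = j
    · subst hij
      simpa [← hbase] using hG i x u'
    · rw [distTo_inclG_of_ne j u'.1 hij]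
      calc
        _ ≤ (glue G H u v).dist (inclG G H u v i x) (inclG G H u v i (u i)) +
              (glue G H u v).dist (.inr (v i)) (.inl ⟨j, u'⟩) := by
          rw [inclG_apply_self]
          exact hJ.dist_triangle
        _ ≤ _ := Nat.add_le_add (hG i _ _) (hinr (v i))
  · exact hinr z

theorem dist_eq_distTo (a : (Σ i, {x : α i // x ≠ u i}) ⊕ β) :
    (glue G H u v).dist a (.inl ⟨j, u'⟩) = distTo G H u v j u' a := by
  refine le_antisymm (dist_le_distTo j hGc hHc u' a) ?_
  have hbase : distTo G H u v j u' (.inl ⟨j, u'⟩) = 0 := by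
    rw [← inclG_apply_coe u', distTo_inclG_self, dist_self]
  have hJ : (glue G H u v).Connected := connected hGc hHc
  simpa [hbase] using
    (hJ.preconnected a (.inl ⟨j, u'⟩)).apply_le_dist_add fun _ _ => distTo_le_of_adj j u'.1

theorem maxDistantFrom_inl_self_iff (x : {z : α j // z ≠ u j}) :
    MaxDistantFrom (glue G H u v) (.inl ⟨j, x⟩) (.inl ⟨j, u'⟩) ↔
      MaxDistantFrom (G j) x u' := by
  rw [← inclG_apply_coe]
  refine maxDistantFrom_map_iff _ (c := 0) (fun y => ?_) fun _ => exists_adj_of_adj_inclG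
  rw [dist_eq_distTo j hGc hHc u', distTo_inclG_self, add_zero]

theorem maxDistantFrom_inl_of_ne_iff {i : Fin k} (hij : i ≠ j) (x : {z : α i // z ≠ u i}) :
    MaxDistantFrom (glue G H u v) (.inl ⟨i, x⟩) (.inl ⟨j, u'⟩) ↔
      MaxDistantFrom (G i) x (u i) := by
  rw [← inclG_apply_coe]
  refine maxDistantFrom_map_iff _ (c := (glue G H u v).dist (.inr (v i)) (.inl ⟨j, u'⟩))
    (fun y => ?_) fun _ => exists_adj_of_adj_inclG
  rw [dist_eq_distTo j hGc hHc u', dist_eq_distTo j hGc hHc u', distTo_inclG_of_ne j u'.1 hij]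

theorem maxDistantFrom_inr_iff [∀ i, Nontrivial (α i)] [Nontrivial β] (z : β) :
    MaxDistantFrom (glue G H u v) (.inr z) (.inl ⟨j, u'⟩) ↔
      MaxDistantFrom H z (v j) ∧ ∀ i, z ≠ v i := by
  have hd (w : β) : (glue G H u v).dist (.inr w) (.inl ⟨j, u'⟩) =
      H.dist w (v j) + (G j).dist (u j) u' := by
    rw [dist_eq_distTo j hGc hHc u', distTo_inr]
  refine ⟨fun h => ⟨h.of_map (inclH G H u v) hd, ?_⟩,
    fun ⟨hz, hzv⟩ => hz.map (inclH G H u v) hd fun _ => exists_adj_of_adj_inr hzv⟩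
  rintro i rfl
  by_cases hij : i = j
  · subst hij
    obtain ⟨w, hw⟩ := hHc.preconnected.exists_adj_of_nontrivial (v i)
    have hfar := h _ ((inclH G H u v).map_adj hw)
    simp only [inclH_apply, hd, dist_self] at hfar
    have := hHc.pos_dist_of_ne hw.ne'
    omega
  · obtain ⟨y, hy⟩ := (hGc i).preconnected.exists_adj_of_nontrivial (u i)
    have hadj := (inclG G H u v i).map_adj hy
    rw [inclG_apply_self] at hadj
    have hfar := h _ hadj
    rw [dist_eq_distTo j hGc hHc u', distTo_inclG_of_ne j u'.1 hij,
      ← dist_eq_distTo j hGc hHc u'] at hfar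
    have := (hGc i).pos_dist_of_ne hy.ne'
    omega

end dist

end glue

/-- For a vertex `u' ≠ u j` of `G j`, the set of vertices maximally distant from `u'`
in the glued graph `J` is
`(MD_{G j}(u') \ {u j}) ∪ (MD_H(v j) \ {v 1,…,v k}) ∪ ⋃ i ≠ j, MD_{G i}(u i)`. -/
theorem glue_maxDistant_from_Gj_vertex {k : ℕ} {α : Fin k → Type*} {β : Type*}
    (G : ∀ i, SimpleGraph (α i)) (H : SimpleGraph β)
    (u : ∀ i, α i) (v : Fin k → β)
    (hGc : ∀ i, (G i).Connected) (hHc : H.Connected)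
    (hGn : ∀ i, Nontrivial (α i)) (hHn : Nontrivial β)
    (j : Fin k) (u' : {z : α j // z ≠ u j}) :
    {a | MaxDistantFrom (glue G H u v) a (Sum.inl ⟨j, u'⟩)} =
      {a | (∃ x : {z : α j // z ≠ u j},
              a = Sum.inl ⟨j, x⟩ ∧ MaxDistantFrom (G j) x.1 u'.1) ∨
        (∃ z : β, a = Sum.inr z ∧ MaxDistantFrom H z (v j) ∧ ∀ i, z ≠ v i) ∨
        (∃ (i : Fin k) (x : {z : α i // z ≠ u i}), i ≠ j ∧
          a = Sum.inl ⟨i, x⟩ ∧ MaxDistantFrom (G i) x.1 (u i))} := by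
  ext (⟨i, x⟩ | z)
  · by_cases hij : i = j
    · subst hij
      rw [Set.mem_ofPred_eq, glue.maxDistantFrom_inl_self_iff i hGc hHc u']
      refine ⟨fun h => .inl ⟨x, rfl, h⟩, ?_⟩
      rintro (⟨_, ⟨⟩, h⟩ | ⟨_, ⟨⟩, _⟩ | ⟨_, _, hne, ⟨⟩, _⟩)
      · exact h
      · exact absurd rfl hne
    · rw [Set.mem_ofPred_eq, glue.maxDistantFrom_inl_of_ne_iff j hGc hHc u' hij]
      refine ⟨fun h => .inr (.inr ⟨i, x, hij, rfl, h⟩), ?_⟩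
      rintro (⟨_, ⟨⟩, _⟩ | ⟨_, ⟨⟩, _⟩ | ⟨_, _, _, ⟨⟩, h⟩)
      · exact absurd rfl hij
      · exact h
  · rw [Set.mem_ofPred_eq, glue.maxDistantFrom_inr_iff j hGc hHc u']
    refine ⟨fun h => .inr (.inl ⟨z, rfl, h⟩), ?_⟩
    rintro (⟨_, ⟨⟩, _⟩ | ⟨_, ⟨⟩, h⟩ | ⟨_, _, _, ⟨⟩, _⟩)
    exact h
end

section
/- With the gluing construction J, two vertices v', v'' ∈ V(H) \ {v_1,...,v_k} are mutually maximally distant in J if and only if they are mutually maximally distant in H. -/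
open SimpleGraph

/-! Distances between vertices of `H` are the same in `J` as in `H`: the inclusion of `H` is a
homomorphism, and collapsing every `G i` onto `v i` turns walks of `J` into walks of `H` that are
no longer. A vertex of `H` other than the `v i` has the same neighbours in `J` as in `H`, so being
maximally distant is decided by the same distances in both graphs. -/
theorem SimpleGraph.edist_le_of_map_adj_or_eq {V W : Type*} {G : SimpleGraph V}
    {G' : SimpleGraph W} (f : V → W) (hf : ∀ a b, G.Adj a b → f a = f b ∨ G'.Adj (f a) (f b))
    (a b : V) : G'.edist (f a) (f b) ≤ G.edist a b := by
  suffices h : ∀ {a b : V} (p : G.Walk a b), ∃ q : G'.Walk (f a) (f b), q.length ≤ p.length by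
    by_cases hr : G.Reachable a b
    · obtain ⟨p, hp⟩ := hr.exists_walk_length_eq_edist
      obtain ⟨q, hq⟩ := h p
      calc G'.edist (f a) (f b) ≤ q.length := edist_le q
        _ ≤ p.length := by exact_mod_cast hq
        _ = G.edist a b := hp
    · simp [edist_eq_top_of_not_reachable hr]
  intro a b p
  induction p with
  | nil => exact ⟨.nil, le_rfl⟩
  | @cons x y _ hxy _ ih =>
    obtain ⟨q, hq⟩ := ih
    rcases hf x y hxy with hfxy | hfxy
    · exact ⟨q.copy hfxy.symm rfl, by simp only [Walk.length_copy, Walk.length_cons]; omega⟩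
    · exact ⟨.cons hfxy q, by simp only [Walk.length_cons]; omega⟩

theorem SimpleGraph.Hom.edist_le {V W : Type*} {G : SimpleGraph V} {G' : SimpleGraph W}
    (f : G →g G') (a b : V) : G'.edist (f a) (f b) ≤ G.edist a b :=
  edist_le_of_map_adj_or_eq f (fun _ _ h => Or.inr (f.map_adj h)) a b

section Glue

variable {k : ℕ} {α : Fin k → Type*} {β : Type*}
    {G : ∀ i, SimpleGraph (α i)} {H : SimpleGraph β} {u : ∀ i, α i} {v : Fin k → β}

variable (G H u v) in
def glueInr : H →g glue G H u v where
  toFun := Sum.inr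
  map_rel' h := Or.inr (Or.inr ⟨_, _, h, rfl, rfl⟩)

variable (u v) in
def glueProj : (Σ i, {x : α i // x ≠ u i}) ⊕ β → β :=
  Sum.elim (fun p => v p.1) id

theorem glue_adj_proj {a b : (Σ i, {x : α i // x ≠ u i}) ⊕ β} (h : (glue G H u v).Adj a b) :
    glueProj u v a = glueProj u v b ∨ H.Adj (glueProj u v a) (glueProj u v b) := by
  rcases h with ⟨i, x, y, -, rfl, rfl⟩ | ⟨i, x, -, ⟨rfl, rfl⟩ | ⟨rfl, rfl⟩⟩ |
      ⟨w, w', hww', rfl, rfl⟩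
  · exact Or.inl rfl
  · exact Or.inl rfl
  · exact Or.inl rfl
  · exact Or.inr hww'

theorem glue_edist_inr (a b : β) :
    (glue G H u v).edist (Sum.inr a) (Sum.inr b) = H.edist a b :=
  le_antisymm ((glueInr G H u v).edist_le a b)
    (edist_le_of_map_adj_or_eq (glueProj u v) (fun _ _ => glue_adj_proj)
      (Sum.inr a) (Sum.inr b))

theorem glue_dist_inr (a b : β) :
    (glue G H u v).dist (Sum.inr a) (Sum.inr b) = H.dist a b := by
  simp only [SimpleGraph.dist, glue_edist_inr]

theorem glue_adj_inr_iff {w : β} (hw : ∀ i, w ≠ v i) (z : (Σ i, {x : α i // x ≠ u i}) ⊕ β) :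
    (glue G H u v).Adj (Sum.inr w) z ↔ ∃ b, H.Adj w b ∧ z = Sum.inr b := by
  constructor
  · rintro (⟨i, x, y, -, h, -⟩ | ⟨i, x, -, ⟨h, -⟩ | ⟨-, h⟩⟩ | ⟨a, b, hab, h, rfl⟩)
    · cases h
    · cases h
    · exact absurd (Sum.inr.inj h) (hw i)
    · exact ⟨b, Sum.inr.inj h ▸ hab, rfl⟩
  · rintro ⟨b, hwb, rfl⟩
    exact (glueInr G H u v).map_adj hwb

theorem maxDistantFrom_glue_inr_iff {w : β} (hw : ∀ i, w ≠ v i) (x : β) :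
    MaxDistantFrom (glue G H u v) (Sum.inr w) (Sum.inr x) ↔ MaxDistantFrom H w x := by
  constructor
  · intro h z hwz
    simpa only [glue_dist_inr] using h (Sum.inr z) ((glue_adj_inr_iff hw _).mpr ⟨z, hwz, rfl⟩)
  · intro h z hwz
    obtain ⟨b, hwb, rfl⟩ := (glue_adj_inr_iff hw z).mp hwz
    simpa only [glue_dist_inr] using h b hwb

end Glue

theorem glue_mmd_within_H_general {k : ℕ} {α : Fin k → Type*} {β : Type*}
    (G : ∀ i, SimpleGraph (α i)) (H : SimpleGraph β)
    (u : ∀ i, α i) (v : Fin k → β)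
    (w w' : β) (hw : ∀ i, w ≠ v i) (hw' : ∀ i, w' ≠ v i) :
    MutuallyMaxDistant (glue G H u v) (Sum.inr w) (Sum.inr w') ↔
      MutuallyMaxDistant H w w' :=
  and_congr (maxDistantFrom_glue_inr_iff hw w') (maxDistantFrom_glue_inr_iff hw' w)

/-- Two vertices of `V(H) \ {v 1,…,v k}` are mutually maximally distant in the glued
graph `J` iff they are mutually maximally distant in `H`. -/
theorem glue_mmd_within_H {k : ℕ} {α : Fin k → Type*} {β : Type*}
    (G : ∀ i, SimpleGraph (α i)) (H : SimpleGraph β)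
    (u : ∀ i, α i) (v : Fin k → β)
    (hGc : ∀ i, (G i).Connected) (hHc : H.Connected)
    (hGn : ∀ i, Nontrivial (α i)) (hHn : Nontrivial β)
    (w w' : β) (hw : ∀ i, w ≠ v i) (hw' : ∀ i, w' ≠ v i) :
    MutuallyMaxDistant (glue G H u v) (Sum.inr w) (Sum.inr w') ↔
      MutuallyMaxDistant H w w' :=
  glue_mmd_within_H_general G H u v w w' hw hw'
end
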